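/- arXiv:1706.01494 — 2 statements merged into one kernel-verified Lean document; each statement's English description precedes it below -/
import Mathlib

section
/- Let γ_ℓ = π(1 - 1/ℓ) and β(α,γ) = 2·arcsin(sin α sin(γ/2)). Then ℓ² · ∂²β/∂α²(2π/3, γ_ℓ) → -2√3·π² as ℓ → ∞. -/
open Real Filter

noncomputable def β (α γ : ℝ) : ℝ := 2 * Real.arcsin (Real.sin α * Real.sin (γ / 2))

/-!
For `c² < 1`, differentiating `2 arcsin (c sin α)` twice gives
`-2 c (1 - c²) sin α / (1 - c² sin² α)^(3/2)`. At `γ = γ_ℓ` we have `c = sin (γ_ℓ / 2) = cos (π / 2ℓ)`,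
so `1 - c² = sin² (π / 2ℓ)` and `ℓ² (1 - c²) → π² / 4`, while the remaining factor tends to its
value at `c = 1`, namely `-2 sin (2π/3) / (1 - sin² (2π/3))^(3/2) = -8√3`.
-/

open Topology

section ArcsinSinMul

variable {c : ℝ}

lemma one_sub_sq_sin_mul_pos (hc : c ^ 2 < 1) (x : ℝ) : 0 < 1 - (sin x * c) ^ 2 := by
  nlinarith [sin_sq_le_one x, sq_nonneg c, mul_pow (sin x) c 2]

lemma hasDerivAt_two_mul_arcsin_sin_mul (hc : c ^ 2 < 1) (x : ℝ) :
    HasDerivAt (fun y => 2 * arcsin (sin y * c)) (2 * c * cos x / √(1 - (sin x * c) ^ 2)) x := by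
  have hlt : |sin x * c| < 1 := by
    rw [← sq_lt_one_iff_abs_lt_one]; linarith [one_sub_sq_sin_mul_pos hc x]
  have h := ((hasDerivAt_arcsin (abs_lt.mp hlt).1.ne' (abs_lt.mp hlt).2.ne).comp x
    ((hasDerivAt_sin x).mul_const c)).const_mul 2
  exact h.congr_deriv (by ring)

lemma hasDerivAt_two_mul_cos_div_sqrt (hc : c ^ 2 < 1) (x : ℝ) :
    HasDerivAt (fun y => 2 * c * cos y / √(1 - (sin y * c) ^ 2))
      (-2 * c * (1 - c ^ 2) * sin x / √(1 - (sin x * c) ^ 2) ^ 3) x := by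
  have hu := one_sub_sq_sin_mul_pos hc x
  have hsqrt : HasDerivAt (fun y => √(1 - (sin y * c) ^ 2))
      (-(c ^ 2 * sin x * cos x) / √(1 - (sin x * c) ^ 2)) x :=
    (((((hasDerivAt_sin x).mul_const c).pow 2).const_sub 1).sqrt hu.ne').congr_deriv (by
      simp only [Pi.pow_apply]; field_simp; ring)
  refine (((hasDerivAt_cos x).const_mul (2 * c)).div hsqrt (sqrt_pos.mpr hu).ne').congr_deriv ?_
  have hs : √(1 - (sin x * c) ^ 2) ^ 2 = 1 - (sin x * c) ^ 2 := sq_sqrt hu.le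
  field_simp
  rw [mul_comm (sin x), mul_pow] at hs
  rw [hs, ← neg_div]
  congr 1
  linear_combination (c * sin x * c ^ 2) * sin_sq_add_cos_sq x

lemma deriv_deriv_two_mul_arcsin_sin_mul (hc : c ^ 2 < 1) (x : ℝ) :
    deriv (deriv fun y => 2 * arcsin (sin y * c)) x
      = -2 * c * (1 - c ^ 2) * sin x / √(1 - (sin x * c) ^ 2) ^ 3 := by
  rw [funext fun y => (hasDerivAt_two_mul_arcsin_sin_mul hc y).deriv]
  exact (hasDerivAt_two_mul_cos_div_sqrt hc x).deriv

end ArcsinSinMul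

lemma deriv_deriv_β {γ : ℝ} (hγ : cos (γ / 2) ≠ 0) (α : ℝ) :
    deriv (deriv fun a => β a γ) α
      = -2 * sin (γ / 2) * cos (γ / 2) ^ 2 * sin α / √(1 - (sin α * sin (γ / 2)) ^ 2) ^ 3 := by
  have hc : sin (γ / 2) ^ 2 < 1 := by
    rw [sin_sq]; exact sub_lt_self 1 (sq_pos_of_ne_zero hγ)
  rw [show (fun a => β a γ) = fun a => 2 * arcsin (sin a * sin (γ / 2)) from rfl,
    deriv_deriv_two_mul_arcsin_sin_mul hc, ← cos_sq']

lemma sin_pi_mul_one_sub_one_div_div_two (x : ℝ) :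
    sin (π * (1 - 1 / x) / 2) = cos (π / 2 / x) := by
  rw [← sin_pi_div_two_sub]; ring_nf

lemma cos_pi_mul_one_sub_one_div_div_two (x : ℝ) :
    cos (π * (1 - 1 / x) / 2) = sin (π / 2 / x) := by
  rw [← cos_pi_div_two_sub]; ring_nf

lemma sin_two_pi_div_three : sin (2 * π / 3) = √3 / 2 := by
  rw [show 2 * π / 3 = π - π / 3 by ring, sin_pi_sub, sin_pi_div_three]

lemma mul_sinc (x : ℝ) : x * sinc x = sin x := by
  rcases eq_or_ne x 0 with rfl | hx
  · simp
  · rw [sinc_of_ne_zero hx]; field_simp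

lemma tendsto_cos_div_natCast (a : ℝ) : Tendsto (fun n : ℕ => cos (a / n)) atTop (𝓝 1) := by
  have h := (continuous_cos.tendsto 0).comp (tendsto_const_div_atTop_nhds_zero_nat a)
  rwa [cos_zero] at h

lemma tendsto_natCast_mul_sin_div_natCast (a : ℝ) :
    Tendsto (fun n : ℕ => n * sin (a / n)) atTop (𝓝 a) := by
  have h := ((continuous_sinc.tendsto 0).comp (tendsto_const_div_atTop_nhds_zero_nat a)).const_mul a
  rw [sinc_zero, mul_one] at h
  refine h.congr' ?_
  filter_upwards [eventually_ne_atTop 0] with n hn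
  rw [Function.comp_apply, ← mul_sinc]
  field_simp

theorem limit_second_deriv_beta_alpha :
    Tendsto (fun ℓ : ℕ =>
        (ℓ : ℝ) ^ 2 * deriv (deriv (fun α => β α (π * (1 - 1 / ℓ)))) (2 * π / 3))
      atTop (nhds (-(2 * Real.sqrt 3 * π ^ 2))) := by
  set F : ℝ → ℝ := fun c => -2 * c * sin (2 * π / 3) / √(1 - (sin (2 * π / 3) * c) ^ 2) ^ 3
  have hF_denom : √(1 - (sin (2 * π / 3) * 1) ^ 2) = 1 / 2 := by
    rw [sin_two_pi_div_three, ← sqrt_sq (show (0 : ℝ) ≤ 1 / 2 by norm_num)]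
    congr 1
    linear_combination (-1 / 4 : ℝ) * sq_sqrt (show (0 : ℝ) ≤ 3 by norm_num)
  have hF_cont : ContinuousAt F 1 :=
    ContinuousAt.div (by fun_prop) (by fun_prop) (by rw [hF_denom]; norm_num)
  have hF_one : F 1 = -8 * √3 := by
    simp only [F]
    rw [hF_denom, sin_two_pi_div_three]
    ring
  have hlim := (hF_cont.tendsto.comp (tendsto_cos_div_natCast (π / 2))).mul
    ((tendsto_natCast_mul_sin_div_natCast (π / 2)).pow 2)
  rw [hF_one, show -8 * √3 * (π / 2) ^ 2 = -(2 * √3 * π ^ 2) by ring] at hlim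
  refine hlim.congr' ?_
  filter_upwards [eventually_ge_atTop 1] with ℓ hℓ
  have hsin_pos : 0 < sin (π / 2 / ℓ) := by
    have : π / 2 / ℓ ≤ π / 2 := div_le_self (by positivity) (by exact_mod_cast hℓ)
    exact sin_pos_of_pos_of_lt_pi (by positivity) (by linarith [pi_pos])
  rw [deriv_deriv_β (by rw [cos_pi_mul_one_sub_one_div_div_two]; exact hsin_pos.ne'),
    sin_pi_mul_one_sub_one_div_div_two, cos_pi_mul_one_sub_one_div_div_two]
  simp only [Function.comp_apply, F]
  ring
end

section
/- Let x₁, x₂, x₃, x ∈ ℝ³ with x, x₁, x₂, x₃ pairwise distinct, and suppose the four points are coplanar with x₁, x₂, x₃ positioned around x such that the three angles ∠(x₁,x,x₂), ∠(x₂,x,x₃), ∠(x₃,x,x₁) sum to 2π. For any four points y, y₁, y₂, y₃ ∈ ℝ³ (not necessarily coplanar, with y distinct from each yᵢ), the sum of angles ∠(y₁,y,y₂) + ∠(y₂,y,y₃) + ∠(y₃,y,y₁) is at most 2π. -/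
open Real EuclideanGeometry

section Aux

variable {V : Type*} [NormedAddCommGroup V] [InnerProductSpace ℝ V]

local notation "⟪" x ", " y "⟫" => @inner ℝ V _ x y

lemma unit_inner_ineq (u v w : V) (hu : ‖u‖ = 1) (hv : ‖v‖ = 1) (hw : ‖w‖ = 1) :
    ⟪u, v⟫ * ⟪v, w⟫ - Real.sqrt (1 - ⟪u, v⟫ ^ 2) * Real.sqrt (1 - ⟪v, w⟫ ^ 2) ≤ ⟪u, w⟫ := by
  set p := ⟪u, v⟫ with hp
  set q := ⟪v, w⟫ with hq
  have hvv : ⟪v, v⟫ = 1 := by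
    rw [real_inner_self_eq_norm_sq, hv]; norm_num
  have hvu : ⟪v, u⟫ = p := (real_inner_comm v u).symm
  have hwv : ⟪w, v⟫ = q := (real_inner_comm w v).symm
  have h1 : ‖u - p • v‖ ^ 2 = 1 - p ^ 2 := by
    rw [norm_sub_sq_real, real_inner_smul_right, norm_smul, hu, hv, ← hp]
    have : (‖p‖ * 1) ^ 2 = p ^ 2 := by
      rw [mul_one, Real.norm_eq_abs, sq_abs]
    rw [this]; ring
  have h2 : ‖w - q • v‖ ^ 2 = 1 - q ^ 2 := by
    rw [norm_sub_sq_real, real_inner_smul_right, norm_smul, hw, hv, hwv]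
    have : (‖q‖ * 1) ^ 2 = q ^ 2 := by
      rw [mul_one, Real.norm_eq_abs, sq_abs]
    rw [this]; ring
  have hnu : ‖u - p • v‖ = Real.sqrt (1 - p ^ 2) := by
    rw [← h1, Real.sqrt_sq (norm_nonneg _)]
  have hnw : ‖w - q • v‖ = Real.sqrt (1 - q ^ 2) := by
    rw [← h2, Real.sqrt_sq (norm_nonneg _)]
  have hinner : ⟪u - p • v, w - q • v⟫ = ⟪u, w⟫ - p * q := by
    rw [inner_sub_left, inner_sub_right, inner_sub_right, real_inner_smul_left,
      real_inner_smul_left, real_inner_smul_right, real_inner_smul_right, hvv, ← hp, ← hq]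
    ring
  have hcs := abs_real_inner_le_norm (u - p • v) (w - q • v)
  rw [hinner, hnu, hnw] at hcs
  linarith [(abs_le.mp hcs).1]

lemma angle_triangle_unit (u v w : V) (hu : ‖u‖ = 1) (hv : ‖v‖ = 1) (hw : ‖w‖ = 1) :
    InnerProductGeometry.angle u w ≤
      InnerProductGeometry.angle u v + InnerProductGeometry.angle v w := by
  set a := InnerProductGeometry.angle u v with ha
  set b := InnerProductGeometry.angle v w with hb
  set c := InnerProductGeometry.angle u w with hc
  have ha0 := InnerProductGeometry.angle_nonneg u v
  have hb0 := InnerProductGeometry.angle_nonneg v w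
  have hc0 := InnerProductGeometry.angle_nonneg u w
  have haπ := InnerProductGeometry.angle_le_pi u v
  have hbπ := InnerProductGeometry.angle_le_pi v w
  have hcπ := InnerProductGeometry.angle_le_pi u w
  rcases le_or_gt π (a + b) with h | h
  · linarith
  · -- cos (a + b) ≤ cos c
    have hcosa : Real.cos a = ⟪u, v⟫ := by
      rw [ha, InnerProductGeometry.cos_angle, hu, hv]; norm_num
    have hcosb : Real.cos b = ⟪v, w⟫ := by
      rw [hb, InnerProductGeometry.cos_angle, hv, hw]; norm_num
    have hcosc : Real.cos c = ⟪u, w⟫ := by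
      rw [hc, InnerProductGeometry.cos_angle, hu, hw]; norm_num
    have hsina : Real.sin a = Real.sqrt (1 - ⟪u, v⟫ ^ 2) := by
      rw [Real.sin_eq_sqrt_one_sub_cos_sq ha0 haπ, hcosa]
    have hsinb : Real.sin b = Real.sqrt (1 - ⟪v, w⟫ ^ 2) := by
      rw [Real.sin_eq_sqrt_one_sub_cos_sq hb0 hbπ, hcosb]
    have hkey : Real.cos (a + b) ≤ Real.cos c := by
      rw [Real.cos_add, hcosa, hcosb, hcosc, hsina, hsinb]
      exact unit_inner_ineq u v w hu hv hw
    by_contra hcon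
    push_neg at hcon
    have := Real.strictAntiOn_cos (Set.mem_Icc.mpr ⟨by linarith, by linarith⟩)
      (Set.mem_Icc.mpr ⟨hc0, hcπ⟩) hcon
    linarith

lemma angle_triangle' (x y z : V) :
    InnerProductGeometry.angle x z ≤
      InnerProductGeometry.angle x y + InnerProductGeometry.angle y z := by
  by_cases hx : x = 0
  · rw [hx, InnerProductGeometry.angle_zero_left, InnerProductGeometry.angle_zero_left]
    linarith [InnerProductGeometry.angle_nonneg y z]
  by_cases hz : z = 0
  · rw [hz, InnerProductGeometry.angle_zero_right, InnerProductGeometry.angle_zero_right]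
    linarith [InnerProductGeometry.angle_nonneg x y]
  by_cases hy : y = 0
  · rw [hy, InnerProductGeometry.angle_zero_right, InnerProductGeometry.angle_zero_left]
    linarith [InnerProductGeometry.angle_le_pi x z]
  have hxn : (0:ℝ) < ‖x‖⁻¹ := inv_pos.mpr (norm_pos_iff.mpr hx)
  have hyn : (0:ℝ) < ‖y‖⁻¹ := inv_pos.mpr (norm_pos_iff.mpr hy)
  have hzn : (0:ℝ) < ‖z‖⁻¹ := inv_pos.mpr (norm_pos_iff.mpr hz)
  have hu : ‖‖x‖⁻¹ • x‖ = 1 := by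
    rw [norm_smul, norm_inv, norm_norm, inv_mul_cancel₀ (norm_ne_zero_iff.mpr hx)]
  have hv : ‖‖y‖⁻¹ • y‖ = 1 := by
    rw [norm_smul, norm_inv, norm_norm, inv_mul_cancel₀ (norm_ne_zero_iff.mpr hy)]
  have hw : ‖‖z‖⁻¹ • z‖ = 1 := by
    rw [norm_smul, norm_inv, norm_norm, inv_mul_cancel₀ (norm_ne_zero_iff.mpr hz)]
  have h := angle_triangle_unit (‖x‖⁻¹ • x) (‖y‖⁻¹ • y) (‖z‖⁻¹ • z) hu hv hw
  rwa [InnerProductGeometry.angle_smul_left_of_pos _ _ hxn,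
    InnerProductGeometry.angle_smul_right_of_pos _ _ hyn,
    InnerProductGeometry.angle_smul_left_of_pos _ _ hyn,
    InnerProductGeometry.angle_smul_right_of_pos _ _ hzn,
    InnerProductGeometry.angle_smul_left_of_pos _ _ hxn,
    InnerProductGeometry.angle_smul_right_of_pos _ _ hzn] at h

lemma three_angles_le_two_pi (a b c : V) :
    InnerProductGeometry.angle a b + InnerProductGeometry.angle b c +
      InnerProductGeometry.angle c a ≤ 2 * π := by
  have h1 := angle_triangle' a (-c) b
  have h2 : InnerProductGeometry.angle a (-c) = π - InnerProductGeometry.angle a c :=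
    InnerProductGeometry.angle_neg_right a c
  have h3 : InnerProductGeometry.angle (-c) b = π - InnerProductGeometry.angle c b :=
    InnerProductGeometry.angle_neg_left c b
  rw [h2, h3] at h1
  rw [InnerProductGeometry.angle_comm c a] at *
  rw [InnerProductGeometry.angle_comm b c] at *
  linarith

end Aux

theorem triple_junction_angle_sum
    (x x₁ x₂ x₃ : EuclideanSpace ℝ (Fin 3))
    (hne₁ : x ≠ x₁) (hne₂ : x ≠ x₂) (hne₃ : x ≠ x₃)
    (hne₁₂ : x₁ ≠ x₂) (hne₂₃ : x₂ ≠ x₃) (hne₃₁ : x₃ ≠ x₁)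
    (hcop : Coplanar ℝ ({x, x₁, x₂, x₃} : Set (EuclideanSpace ℝ (Fin 3))))
    (hsum : ∠ x₁ x x₂ + ∠ x₂ x x₃ + ∠ x₃ x x₁ = 2 * π) :
    ∀ y y₁ y₂ y₃ : EuclideanSpace ℝ (Fin 3),
      y ≠ y₁ → y ≠ y₂ → y ≠ y₃ →
      ∠ y₁ y y₂ + ∠ y₂ y y₃ + ∠ y₃ y y₁ ≤ 2 * π := by
  intro y y₁ y₂ y₃ _ _ _
  exact three_angles_le_two_pi (y₁ -ᵥ y) (y₂ -ᵥ y) (y₃ -ᵥ y)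
end
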